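/- arXiv:1811.09695 — 2 statements merged into one kernel-verified Lean document; each statement's English description precedes it below -/
import Mathlib

section
/- Let W be a binary-input discrete memoryless channel with finite output alphabet 𝒵, with Q_0 = W(·|0) everywhere positive and Q_1 = W(·|1). Let G ∈ F_2^{k×n}, let 𝒮 ⊆ {1,…,n} be a set of column indices such that the columns {g_j}_{j∈𝒮} of G are nonzero and pairwise distinct, and define for z ∈ 𝒵^n the statistic T(z) = (1/|𝒮|) Σ_{j∈𝒮} (Q_1(z_j)−Q_0(z_j))/Q_0(z_j). Let Q̂^n(z) = 2^{−k} Σ_{v∈F_2^k} W^{⊗n}(z | vG). Then: (i) E_{Q_0^{⊗n}}[T(Z)] = 0 and Var_{Q_0^{⊗n}}(T(Z)) = χ_2(Q_1‖Q_0)/|𝒮|; (ii) E_{Q̂^n}[T(Z)] = χ_2(Q_1‖Q_0)/2 and Var_{Q̂^n}(T(Z)) = (1/|𝒮|)·( χ_2(Q_1‖Q_0) + χ_3(Q_1‖Q_0)/2 − χ_2(Q_1‖Q_0)^2/4 ). -/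
open Finset

/-- `P` is a probability mass function on a finite alphabet. -/
def IsPMF {𝒵 : Type} [Fintype 𝒵] (P : 𝒵 → ℝ) : Prop :=
  (∀ z, 0 ≤ P z) ∧ ∑ z, P z = 1

/-- `n`-fold memoryless extension of the binary-input channel `W`. -/
noncomputable def prodCh {𝒵 : Type} (W : Bool → 𝒵 → ℝ) (n : ℕ)
    (z : Fin n → 𝒵) (x : Fin n → Bool) : ℝ :=
  ∏ t, W (x t) (z t)

/-- `χ_t(Q1‖Q0) = ∑_z (Q1(z)-Q0(z))^t / Q0(z)^{t-1}`. -/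
noncomputable def chiDiv {𝒵 : Type} [Fintype 𝒵] (t : ℕ) (Q1 Q0 : 𝒵 → ℝ) : ℝ :=
  ∑ z, (Q1 z - Q0 z) ^ t / (Q0 z) ^ (t - 1)

/-- Expectation of `f` under the pmf `p` on a finite alphabet. -/
noncomputable def expec {α : Type} [Fintype α] (p f : α → ℝ) : ℝ :=
  ∑ z, p z * f z

/-- Variance of `f` under the pmf `p` on a finite alphabet. -/
noncomputable def varia {α : Type} [Fintype α] (p f : α → ℝ) : ℝ :=
  ∑ z, p z * (f z - expec p f)^2

/-!
Under the product distribution `W^{⊗n}(· | x)` the scores `ψ(z_j) = (Q₁ - Q₀)/Q₀ (z_j)` are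
independent, with mean `[x_j = 1] χ₂` and second moment `χ₂ + [x_j = 1] χ₃`. Averaging over the
message `v`, the bit `(vG)_j` of a nonzero column is `1` for exactly half of the messages, and for
two distinct nonzero columns `(vG)_j = (vG)_l = 1` holds for exactly a quarter of them, because
`g_j + g_l ≠ 0` over `F₂`. Expanding `T²` into diagonal and off-diagonal terms gives the moments.
-/

section Moments

variable {α : Type} [Fintype α]

lemma expec_const_mul (p f : α → ℝ) (c : ℝ) : expec p (fun z => c * f z) = c * expec p f := by
  simp only [expec, mul_sum]
  exact sum_congr rfl fun z _ => mul_left_comm _ _ _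

lemma varia_const_mul (p f : α → ℝ) (c : ℝ) :
    varia p (fun z => c * f z) = c ^ 2 * varia p f := by
  simp only [varia, expec_const_mul, mul_sum]
  exact sum_congr rfl fun z _ => by ring

lemma varia_eq_expec_sq_sub_sq {p : α → ℝ} (hp : ∑ z, p z = 1) (f : α → ℝ) :
    varia p f = expec p (fun z => f z ^ 2) - expec p f ^ 2 := by
  have expand : ∀ z, p z * (f z - expec p f) ^ 2
      = p z * f z ^ 2 - 2 * expec p f * (p z * f z) + expec p f ^ 2 * p z := fun z => by ring
  simp only [varia, expand, sum_add_distrib, sum_sub_distrib, ← mul_sum, hp]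
  simp only [expec]
  ring

lemma expec_mixture {β : Type} [Fintype β] (c : ℝ) (P : β → α → ℝ) (f : α → ℝ) :
    expec (fun z => c * ∑ v, P v z) f = c * ∑ v, expec (P v) f := by
  simp only [expec, mul_sum, sum_mul]
  rw [sum_comm]
  exact sum_congr rfl fun v _ => sum_congr rfl fun z _ => mul_assoc _ _ _

end Moments

lemma sum_sum_ite_eq_const {α : Type} [DecidableEq α] (s : Finset α) (a b : ℝ) :
    ∑ j ∈ s, ∑ l ∈ s, (if j = l then a else b) = #s * a + #s * (#s - 1) * b := by
  have row : ∀ j ∈ s, ∑ l ∈ s, (if j = l then a else b) = (a - b) + #s * b := by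
    intro j hj
    have decompose : ∀ l, (if j = l then a else b) = (if j = l then a - b else 0) + b := by
      intro l; split_ifs <;> ring
    simp only [decompose, sum_add_distrib, sum_ite_eq, if_pos hj, sum_const, nsmul_eq_mul]
  rw [sum_congr rfl row, sum_const, nsmul_eq_mul]
  ring

section ProductPMF

variable {ι 𝒵 : Type} [Fintype ι] [DecidableEq ι] [Fintype 𝒵] {q : ι → 𝒵 → ℝ}

lemma sum_prod_eq_one (hq : ∀ t, ∑ y, q t y = 1) : ∑ z : ι → 𝒵, ∏ t, q t (z t) = 1 := by
  rw [← Fintype.prod_sum]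
  exact prod_eq_one fun t _ => hq t

lemma sum_prod_mul_prod_eq_prod_sum (hq : ∀ t, ∑ y, q t y = 1) (s : Finset ι)
    (f : ι → 𝒵 → ℝ) :
    ∑ z : ι → 𝒵, (∏ t, q t (z t)) * ∏ t ∈ s, f t (z t) = ∏ t ∈ s, ∑ y, q t y * f t y := by
  have extend : ∀ g : ι → ℝ, ∏ t ∈ s, g t = ∏ t, if t ∈ s then g t else 1 := fun g => by
    rw [prod_ite_mem, univ_inter]
  simp only [extend, ← prod_mul_distrib]
  refine (Fintype.prod_sum fun t y => q t y * if t ∈ s then f t y else 1).symm.trans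
    (prod_congr rfl fun t _ => ?_)
  split_ifs
  · rfl
  · simp [hq t]

lemma expec_prod_sum_apply (hq : ∀ t, ∑ y, q t y = 1) (s : Finset ι) (f : 𝒵 → ℝ) :
    expec (fun z : ι → 𝒵 => ∏ t, q t (z t)) (fun z => ∑ j ∈ s, f (z j))
      = ∑ j ∈ s, ∑ y, q j y * f y := by
  simp only [expec, mul_sum]
  rw [sum_comm]
  refine sum_congr rfl fun j _ => ?_
  simpa using sum_prod_mul_prod_eq_prod_sum hq {j} (fun _ => f)

lemma expec_prod_sum_apply_sq (hq : ∀ t, ∑ y, q t y = 1) (s : Finset ι) (f : 𝒵 → ℝ) :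
    expec (fun z : ι → 𝒵 => ∏ t, q t (z t)) (fun z => (∑ j ∈ s, f (z j)) ^ 2)
      = ∑ j ∈ s, ∑ l ∈ s, if j = l then ∑ y, q j y * f y ^ 2
          else (∑ y, q j y * f y) * ∑ y, q l y * f y := by
  simp only [expec, sq, sum_mul_sum]
  simp only [mul_sum]
  rw [sum_comm]
  refine sum_congr rfl fun j _ => ?_
  rw [sum_comm]
  refine sum_congr rfl fun l _ => ?_
  split_ifs with hjl
  · subst hjl
    simpa using sum_prod_mul_prod_eq_prod_sum hq {j} (fun _ y => f y * f y)
  · simpa [prod_pair hjl, sum_mul_sum] using sum_prod_mul_prod_eq_prod_sum hq {j, l} (fun _ => f)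

end ProductPMF

section Score

variable {𝒵 : Type} [Fintype 𝒵]

noncomputable def chiScore (Q1 Q0 : 𝒵 → ℝ) (y : 𝒵) : ℝ := (Q1 y - Q0 y) / Q0 y

noncomputable def scoreSum {ι : Type} (Q1 Q0 : 𝒵 → ℝ) (s : Finset ι) (z : ι → 𝒵) : ℝ :=
  ∑ j ∈ s, chiScore Q1 Q0 (z j)

variable {W : Bool → 𝒵 → ℝ}

lemma sum_mul_chiScore (hW : ∀ b, ∑ y, W b y = 1) (hQ0 : ∀ y, W false y ≠ 0) (b : Bool) :
    ∑ y, W b y * chiScore (W true) (W false) y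
      = if b then chiDiv 2 (W true) (W false) else 0 := by
  cases b
  · have h : ∀ y, W false y * chiScore (W true) (W false) y = W true y - W false y :=
      fun y => by simp only [chiScore]; field_simp [hQ0 y]
    simp [h, sum_sub_distrib, hW]
  · have h : ∀ y, W true y * chiScore (W true) (W false) y
        = (W true y - W false y) ^ 2 / W false y ^ (2 - 1) + (W true y - W false y) :=
      fun y => by simp only [chiScore]; field_simp [hQ0 y]; ring
    simp [h, sum_add_distrib, sum_sub_distrib, hW, chiDiv]

lemma sum_mul_chiScore_sq (hQ0 : ∀ y, W false y ≠ 0) (b : Bool) :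
    ∑ y, W b y * chiScore (W true) (W false) y ^ 2
      = chiDiv 2 (W true) (W false) + if b then chiDiv 3 (W true) (W false) else 0 := by
  cases b
  · simp only [chiDiv, chiScore, Bool.false_eq_true, if_false, add_zero]
    exact sum_congr rfl fun y _ => by field_simp [hQ0 y]; ring
  · simp only [chiDiv, chiScore, if_true, ← sum_add_distrib]
    exact sum_congr rfl fun y _ => by field_simp [hQ0 y]; ring

lemma expec_prodCh_scoreSum (hW : ∀ b, ∑ y, W b y = 1) (hQ0 : ∀ y, W false y ≠ 0)
    {n : ℕ} (s : Finset (Fin n)) (x : Fin n → Bool) :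
    expec (fun z => prodCh W n z x) (scoreSum (W true) (W false) s)
      = ∑ j ∈ s, if x j then chiDiv 2 (W true) (W false) else 0 :=
  (expec_prod_sum_apply (q := fun t => W (x t)) (fun t => hW (x t)) s _).trans
    (sum_congr rfl fun j _ => sum_mul_chiScore hW hQ0 (x j))

lemma expec_prodCh_scoreSum_sq (hW : ∀ b, ∑ y, W b y = 1) (hQ0 : ∀ y, W false y ≠ 0)
    {n : ℕ} (s : Finset (Fin n)) (x : Fin n → Bool) :
    expec (fun z => prodCh W n z x) (fun z => scoreSum (W true) (W false) s z ^ 2)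
      = ∑ j ∈ s, ∑ l ∈ s, if j = l
          then chiDiv 2 (W true) (W false) + (if x j then chiDiv 3 (W true) (W false) else 0)
          else (if x j then chiDiv 2 (W true) (W false) else 0)
            * (if x l then chiDiv 2 (W true) (W false) else 0) := by
  refine (expec_prod_sum_apply_sq (q := fun t => W (x t)) (fun t => hW (x t)) s _).trans ?_
  simp only [sum_mul_chiScore hW hQ0, sum_mul_chiScore_sq hQ0]

end Score

section DotProductCount

lemma ZMod.two_cases (a : ZMod 2) : a = 0 ∨ a = 1 := by
  revert a; decide

variable {ι : Type} [Fintype ι] [DecidableEq ι]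

lemma sum_ite_dotProduct_eq_one {g : ι → ZMod 2} (hg : g ≠ 0) :
    ∑ v : ι → ZMod 2, (if v ⬝ᵥ g = 1 then (1 : ℝ) else 0)
      = Fintype.card (ι → ZMod 2) / 2 := by
  obtain ⟨i, hi⟩ := Function.ne_iff.mp hg
  have hgi : g i = 1 := (ZMod.two_cases (g i)).resolve_left hi
  have flip : ∀ a : ZMod 2, (if a + 1 = 1 then (1 : ℝ) else 0) = 1 - if a = 1 then 1 else 0 := by
    intro a; rcases ZMod.two_cases a with rfl | rfl <;> simp
  -- translating `v` by `Pi.single i 1` adds `g i = 1` to `v ⬝ᵥ g`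
  have shift := Equiv.sum_comp (Equiv.addRight (Pi.single i 1 : ι → ZMod 2))
    fun v => if v ⬝ᵥ g = 1 then (1 : ℝ) else 0
  simp only [Equiv.coe_addRight, add_dotProduct, single_dotProduct, hgi, flip,
    sum_sub_distrib, sum_const, card_univ, nsmul_eq_mul, mul_one] at shift
  linarith

lemma sum_ite_dotProduct_eq_one_and {g h : ι → ZMod 2} (hg : g ≠ 0) (hh : h ≠ 0) (hgh : g ≠ h) :
    ∑ v : ι → ZMod 2, (if v ⬝ᵥ g = 1 ∧ v ⬝ᵥ h = 1 then (1 : ℝ) else 0)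
      = Fintype.card (ι → ZMod 2) / 4 := by
  have both : ∀ a b : ZMod 2, (if a = 1 ∧ b = 1 then (1 : ℝ) else 0)
      = ((if a = 1 then 1 else 0) + (if b = 1 then 1 else 0) - if a + b = 1 then 1 else 0) / 2 := by
    intro a b
    rcases ZMod.two_cases a with rfl | rfl <;> rcases ZMod.two_cases b with rfl | rfl <;>
      simp [CharTwo.add_self_eq_zero]
  have hgh' : g + h ≠ 0 := fun h0 => hgh (funext fun i => CharTwo.add_eq_zero.mp (congrFun h0 i))
  simp only [both, ← dotProduct_add, ← sum_div, sum_sub_distrib, sum_add_distrib,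
    sum_ite_dotProduct_eq_one hg, sum_ite_dotProduct_eq_one hh, sum_ite_dotProduct_eq_one hgh']
  ring

end DotProductCount

section Code

variable {k n : ℕ}

def codeword (G : Matrix (Fin k) (Fin n) (ZMod 2)) (v : Fin k → ZMod 2) : Fin n → Bool :=
  fun t => if Matrix.vecMul v G t = 1 then true else false

lemma codeword_eq_true {G : Matrix (Fin k) (Fin n) (ZMod 2)} {v : Fin k → ZMod 2} {j : Fin n} :
    codeword G v j = true ↔ v ⬝ᵥ (fun i => G i j) = 1 := by
  unfold codeword
  split_ifs with h <;> simp_all [Matrix.vecMul]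

lemma card_fun_fin_zmod_two : (Fintype.card (Fin k → ZMod 2) : ℝ) = 2 ^ k := by
  simp

variable {G : Matrix (Fin k) (Fin n) (ZMod 2)}

lemma average_ite_codeword {j : Fin n} (hj : (fun i => G i j) ≠ 0) (A : ℝ) :
    ((2 : ℝ) ^ k)⁻¹ * ∑ v, (if codeword G v j then A else 0) = A / 2 := by
  simp only [codeword_eq_true, ← mul_boole _ A, ← mul_sum, sum_ite_dotProduct_eq_one hj,
    card_fun_fin_zmod_two]
  field_simp

lemma average_ite_codeword_mul {j l : Fin n} (hj : (fun i => G i j) ≠ 0)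
    (hl : (fun i => G i l) ≠ 0) (hjl : (fun i => G i j) ≠ (fun i => G i l)) (A B : ℝ) :
    ((2 : ℝ) ^ k)⁻¹ * ∑ v, (if codeword G v j then A else 0) * (if codeword G v l then B else 0)
      = A * B / 4 := by
  simp only [codeword_eq_true, ite_zero_mul_ite_zero, ← mul_boole _ (A * B), ← mul_sum,
    sum_ite_dotProduct_eq_one_and hj hl hjl, card_fun_fin_zmod_two]
  field_simp

variable {𝒵 : Type} [Fintype 𝒵]

noncomputable def codeOutput (W : Bool → 𝒵 → ℝ) (G : Matrix (Fin k) (Fin n) (ZMod 2))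
    (z : Fin n → 𝒵) : ℝ :=
  ((2 : ℝ) ^ k)⁻¹ * ∑ v, prodCh W n z (codeword G v)

variable {W : Bool → 𝒵 → ℝ}

lemma sum_prodCh_eq_one (hW : ∀ b, ∑ y, W b y = 1) (x : Fin n → Bool) :
    ∑ z, prodCh W n z x = 1 :=
  sum_prod_eq_one fun t => hW (x t)

lemma expec_codeOutput (f : (Fin n → 𝒵) → ℝ) :
    expec (codeOutput W G) f
      = ((2 : ℝ) ^ k)⁻¹ * ∑ v, expec (fun z => prodCh W n z (codeword G v)) f :=
  expec_mixture _ _ f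

lemma sum_codeOutput (hW : ∀ b, ∑ y, W b y = 1) : ∑ z, codeOutput W G z = 1 := by
  have h := expec_codeOutput (W := W) (G := G) fun _ => 1
  simp only [expec, mul_one] at h
  rw [h, sum_congr rfl fun v _ => sum_prodCh_eq_one hW (codeword G v), sum_const, card_univ,
    nsmul_eq_mul, mul_one, card_fun_fin_zmod_two, inv_mul_cancel₀ (by positivity)]

lemma expec_codeOutput_scoreSum (hW : ∀ b, ∑ y, W b y = 1) (hQ0 : ∀ y, W false y ≠ 0)
    {s : Finset (Fin n)} (hs : ∀ j ∈ s, (fun i => G i j) ≠ 0) :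
    expec (codeOutput W G) (scoreSum (W true) (W false) s)
      = #s * chiDiv 2 (W true) (W false) / 2 := by
  simp only [expec_codeOutput, expec_prodCh_scoreSum hW hQ0]
  rw [sum_comm, mul_sum, sum_congr rfl fun j hj => average_ite_codeword (hs j hj) _, sum_const,
    nsmul_eq_mul, mul_div_assoc]

lemma expec_codeOutput_scoreSum_sq (hW : ∀ b, ∑ y, W b y = 1) (hQ0 : ∀ y, W false y ≠ 0)
    {s : Finset (Fin n)} (hs : ∀ j ∈ s, (fun i => G i j) ≠ 0)
    (hdist : ∀ j ∈ s, ∀ l ∈ s, j ≠ l → (fun i => G i j) ≠ (fun i => G i l)) :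
    expec (codeOutput W G) (fun z => scoreSum (W true) (W false) s z ^ 2)
      = #s * (chiDiv 2 (W true) (W false) + chiDiv 3 (W true) (W false) / 2)
        + #s * (#s - 1) * (chiDiv 2 (W true) (W false) ^ 2 / 4) := by
  simp only [expec_codeOutput, expec_prodCh_scoreSum_sq hW hQ0]
  set χ₂ := chiDiv 2 (W true) (W false)
  set χ₃ := chiDiv 3 (W true) (W false)
  have entry : ∀ j ∈ s, ∀ l ∈ s, ((2 : ℝ) ^ k)⁻¹ * ∑ v, (if j = l
      then χ₂ + (if codeword G v j then χ₃ else 0)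
      else (if codeword G v j then χ₂ else 0) * (if codeword G v l then χ₂ else 0))
        = if j = l then χ₂ + χ₃ / 2 else χ₂ ^ 2 / 4 := by
    intro j hj l hl
    split_ifs with hjl
    · rw [sum_add_distrib, mul_add, average_ite_codeword (hs j hj), sum_const, card_univ,
        nsmul_eq_mul, card_fun_fin_zmod_two, inv_mul_cancel_left₀ (by positivity)]
    · rw [average_ite_codeword_mul (hs j hj) (hs l hl) (hdist j hj l hl hjl), sq]
  calc _ = ∑ j ∈ s, ∑ l ∈ s, if j = l then χ₂ + χ₃ / 2 else χ₂ ^ 2 / 4 := by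
        rw [sum_comm, mul_sum]
        refine sum_congr rfl fun j hj => ?_
        rw [sum_comm, mul_sum]
        exact sum_congr rfl fun l hl => entry j hj l hl
    _ = _ := sum_sum_ite_eq_const s _ _

end Code

theorem stmt4_general {𝒵 : Type} [Fintype 𝒵]
    (W : Bool → 𝒵 → ℝ) (hW : ∀ x, IsPMF (W x)) (hQ0pos : ∀ z, 0 < W false z)
    (n k : ℕ)
    (G : Matrix (Fin k) (Fin n) (ZMod 2))
    (𝒮 : Finset (Fin n)) (h𝒮ne : 𝒮.Nonempty)
    (hnz : ∀ j ∈ 𝒮, (fun i => G i j) ≠ 0)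
    (hdist : ∀ j ∈ 𝒮, ∀ l ∈ 𝒮, j ≠ l → (fun i => G i j) ≠ (fun i => G i l)) :
    let T : (Fin n → 𝒵) → ℝ := fun z =>
      (𝒮.card : ℝ)⁻¹ * ∑ j ∈ 𝒮, (W true (z j) - W false (z j)) / W false (z j)
    let Q0n : (Fin n → 𝒵) → ℝ := fun z => prodCh W n z (fun _ => false)
    let Qhat : (Fin n → 𝒵) → ℝ := fun z => ((2:ℝ)^k)⁻¹ * ∑ v : Fin k → ZMod 2,
        prodCh W n z (fun t => if Matrix.vecMul v G t = 1 then true else false)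
    expec Q0n T = 0 ∧
    varia Q0n T = chiDiv 2 (W true) (W false) / 𝒮.card ∧
    expec Qhat T = chiDiv 2 (W true) (W false) / 2 ∧
    varia Qhat T = (𝒮.card : ℝ)⁻¹ * (chiDiv 2 (W true) (W false)
      + chiDiv 3 (W true) (W false) / 2 - (chiDiv 2 (W true) (W false))^2 / 4) := by
  intro T Q0n Qhat
  have hW' : ∀ b, ∑ y, W b y = 1 := fun b => (hW b).2
  have hQ0 : ∀ y, W false y ≠ 0 := fun y => (hQ0pos y).ne'
  have hcard : (#𝒮 : ℝ) ≠ 0 := Nat.cast_ne_zero.2 h𝒮ne.card_pos.ne'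
  set S := scoreSum (W true) (W false) 𝒮
  have hT : T = fun z => (#𝒮 : ℝ)⁻¹ * S z := rfl
  have hQhat : Qhat = codeOutput W G := rfl
  have hQ0n : ∑ z, Q0n z = 1 := sum_prodCh_eq_one hW' _
  have mean₀ : expec Q0n S = 0 := by
    simpa using expec_prodCh_scoreSum hW' hQ0 𝒮 fun _ => false
  have sq₀ : expec Q0n (fun z => S z ^ 2) = #𝒮 * chiDiv 2 (W true) (W false) := by
    simpa using expec_prodCh_scoreSum_sq hW' hQ0 𝒮 fun _ => false
  rw [hT, hQhat, expec_const_mul, expec_const_mul, varia_const_mul, varia_const_mul,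
    varia_eq_expec_sq_sub_sq hQ0n, varia_eq_expec_sq_sub_sq (sum_codeOutput hW'), mean₀, sq₀,
    expec_codeOutput_scoreSum hW' hQ0 hnz, expec_codeOutput_scoreSum_sq hW' hQ0 hnz hdist]
  refine ⟨mul_zero _, ?_, ?_, ?_⟩ <;> field_simp <;> ring

/-- Moments of the detection statistic `T(z) = (1/|𝒮|)∑_{j∈𝒮}(Q1(z_j)−Q0(z_j))/Q0(z_j)`
under the innocent distribution `Q0^{⊗n}` and under the code-induced distribution
`Q̂ⁿ`, when the columns of `G` indexed by `𝒮` are nonzero and pairwise distinct. -/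
theorem stmt4 {𝒵 : Type} [Fintype 𝒵] [DecidableEq 𝒵]
    (W : Bool → 𝒵 → ℝ) (hW : ∀ x, IsPMF (W x)) (hQ0pos : ∀ z, 0 < W false z)
    (n k : ℕ)
    (G : Matrix (Fin k) (Fin n) (ZMod 2))
    (𝒮 : Finset (Fin n)) (h𝒮ne : 𝒮.Nonempty)
    (hnz : ∀ j ∈ 𝒮, (fun i => G i j) ≠ 0)
    (hdist : ∀ j ∈ 𝒮, ∀ l ∈ 𝒮, j ≠ l → (fun i => G i j) ≠ (fun i => G i l)) :
    let T : (Fin n → 𝒵) → ℝ := fun z =>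
      (𝒮.card : ℝ)⁻¹ * ∑ j ∈ 𝒮, (W true (z j) - W false (z j)) / W false (z j)
    let Q0n : (Fin n → 𝒵) → ℝ := fun z => prodCh W n z (fun _ => false)
    let Qhat : (Fin n → 𝒵) → ℝ := fun z => ((2:ℝ)^k)⁻¹ * ∑ v : Fin k → ZMod 2,
        prodCh W n z (fun t => if Matrix.vecMul v G t = 1 then true else false)
    expec Q0n T = 0 ∧
    varia Q0n T = chiDiv 2 (W true) (W false) / 𝒮.card ∧
    expec Qhat T = chiDiv 2 (W true) (W false) / 2 ∧
    varia Qhat T = (𝒮.card : ℝ)⁻¹ * (chiDiv 2 (W true) (W false)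
      + chiDiv 3 (W true) (W false) / 2 - (chiDiv 2 (W true) (W false))^2 / 4) :=
  stmt4_general W hW hQ0pos n k G 𝒮 h𝒮ne hnz hdist
end

section
/- Let X_1,…,X_q be mutually independent finitely-valued random variables and let Z̃ be any finitely-valued random variable on the same finite probability space. Then for every S ⊆ {1,…,q}: Σ_{i∈S} I(X_i; Z̃ | X_{i+1:q}) ≥ I(X_S; Z̃), where X_{i+1:q} = (X_{i+1},…,X_q) and X_S = (X_i)_{i∈S}. -/
open Finset

/-- Pmf of the random variable `T` under the pmf `p` on a finite space. -/
noncomputable def pmOf {Ω D : Type} [Fintype Ω] [DecidableEq D]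
    (p : Ω → ℝ) (T : Ω → D) (d : D) : ℝ :=
  ∑ ω, if T ω = d then p ω else 0

/-- Shannon entropy of the random variable `T` under `p`. -/
noncomputable def ent {Ω D : Type} [Fintype Ω] [Fintype D] [DecidableEq D]
    (p : Ω → ℝ) (T : Ω → D) : ℝ :=
  ∑ d, Real.negMulLog (pmOf p T d)

/-- Mutual information `I(U;V) = H(U)+H(V)−H(U,V)`. -/
noncomputable def MI {Ω A B : Type} [Fintype Ω] [Fintype A] [Fintype B]
    [DecidableEq A] [DecidableEq B] (p : Ω → ℝ) (U : Ω → A) (V : Ω → B) : ℝ :=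
  ent p U + ent p V - ent p (fun ω => (U ω, V ω))

/-- Conditional mutual information `I(U;V|Wc) = H(U,Wc)+H(V,Wc)−H(U,V,Wc)−H(Wc)`. -/
noncomputable def condMI {Ω A B C : Type} [Fintype Ω] [Fintype A] [Fintype B] [Fintype C]
    [DecidableEq A] [DecidableEq B] [DecidableEq C]
    (p : Ω → ℝ) (U : Ω → A) (V : Ω → B) (Wc : Ω → C) : ℝ :=
  ent p (fun ω => (U ω, Wc ω)) + ent p (fun ω => (V ω, Wc ω))
    - ent p (fun ω => (U ω, V ω, Wc ω)) - ent p Wc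

/-!
Peeling off the smallest index of `S` at a time, the chain rule gives
`I(X_S; Z̃) = ∑_{i ∈ S} I(X_i; Z̃ | X_{S ∩ (i, q]})`. Each term is at most the corresponding
`I(X_i; Z̃ | X_{i+1:q})`: when `U` is independent of `W` and `g` is any function,
`I(U; Z | g W) ≤ I(U; (Z, g W)) ≤ I(U; (Z, W)) = I(U; Z | W)`, the middle step being data
processing. Everything rests on the nonnegativity of conditional mutual information, which is
Gibbs' inequality.
-/

lemma sum_mul_log_le_sum_mul_log {ι : Type*} (s : Finset ι) {P Q : ι → ℝ}
    (hP : ∀ i ∈ s, 0 ≤ P i) (hQ : ∀ i ∈ s, 0 ≤ Q i) (hPQ : ∀ i ∈ s, 0 < P i → 0 < Q i)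
    (hsum : ∑ i ∈ s, Q i ≤ ∑ i ∈ s, P i) :
    ∑ i ∈ s, P i * Real.log (Q i) ≤ ∑ i ∈ s, P i * Real.log (P i) := by
  have key : ∀ i ∈ s, P i * Real.log (Q i) - P i * Real.log (P i) ≤ Q i - P i := by
    intro i hi
    rcases (hP i hi).eq_or_lt with h0 | h0
    · simp [← h0, hQ i hi]
    · have hQi := hPQ i hi h0
      calc P i * Real.log (Q i) - P i * Real.log (P i) = P i * Real.log (Q i / P i) := by
            rw [Real.log_div hQi.ne' h0.ne']; ring
        _ ≤ P i * (Q i / P i - 1) :=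
            mul_le_mul_of_nonneg_left (Real.log_le_sub_one_of_pos (div_pos hQi h0)) h0.le
        _ = Q i - P i := by field_simp
  have hsum_key := sum_le_sum key
  simp only [sum_sub_distrib] at hsum_key
  linarith

section Entropy

variable {Ω D E : Type} [Fintype Ω] [DecidableEq D] [DecidableEq E] {p : Ω → ℝ}

lemma pmOf_nonneg (hp : ∀ ω, 0 ≤ p ω) (T : Ω → D) (d : D) : 0 ≤ pmOf p T d :=
  sum_nonneg fun ω _ => by split_ifs <;> simp [hp ω]

lemma sum_pmOf [Fintype D] (hp1 : ∑ ω, p ω = 1) (T : Ω → D) : ∑ d, pmOf p T d = 1 := by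
  simp only [pmOf]
  rw [sum_comm, ← hp1]
  simp

lemma pmOf_comp [Fintype D] (T : Ω → D) (f : D → E) (e : E) :
    pmOf p (fun ω => f (T ω)) e = ∑ d, if f d = e then pmOf p T d else 0 := by
  simp only [pmOf, ← sum_filter]
  rw [sum_fiberwise_eq_sum_filter]
  simp

lemma pmOf_le_pmOf_comp [Fintype D] (hp : ∀ ω, 0 ≤ p ω) (T : Ω → D) (f : D → E) (d : D) :
    pmOf p T d ≤ pmOf p (fun ω => f (T ω)) (f d) := by
  rw [pmOf_comp T f]
  have h := single_le_sum (f := fun d' => if f d' = f d then pmOf p T d' else 0)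
    (fun d' _ => by split_ifs <;> simp [pmOf_nonneg hp]) (mem_univ d)
  rwa [if_pos rfl] at h

lemma ent_comp_eq_sum [Fintype D] [Fintype E] (T : Ω → D) (f : D → E) :
    ent p (fun ω => f (T ω))
      = ∑ d, -(pmOf p T d * Real.log (pmOf p (fun ω => f (T ω)) (f d))) := by
  unfold ent
  simp only [Real.negMulLog, neg_mul]
  conv_lhs => enter [2, e, 1, 1]; rw [pmOf_comp]
  simp only [sum_mul, ← sum_neg_distrib]
  rw [sum_comm]
  refine sum_congr rfl fun d _ => ?_
  simp [ite_mul, sum_ite_eq]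

lemma ent_comp_of_injective [Fintype D] [Fintype E] (T : Ω → D) {f : D → E}
    (hf : Function.Injective f) : ent p (fun ω => f (T ω)) = ent p T := by
  have hpm : ∀ d, pmOf p (fun ω => f (T ω)) (f d) = pmOf p T d := fun d => by
    simp [pmOf_comp, hf.eq_iff]
  rw [ent_comp_eq_sum]
  simp only [hpm, ent, Real.negMulLog, neg_mul]

lemma ent_eq_zero_of_subsingleton [Fintype D] [Subsingleton D] (hp1 : ∑ ω, p ω = 1)
    (T : Ω → D) : ent p T = 0 := by
  rcases isEmpty_or_nonempty D with hD | ⟨⟨d⟩⟩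
  · simp [ent]
  · have hT : pmOf p T d = 1 := by simpa [pmOf, Subsingleton.elim _ d] using hp1
    simp [ent, Fintype.sum_subsingleton _ d, hT]

end Entropy

section Information

variable {Ω A B C E : Type} [Fintype Ω] [Fintype A] [Fintype B] [Fintype C] [Fintype E]
  [DecidableEq A] [DecidableEq B] [DecidableEq C] [DecidableEq E] {p : Ω → ℝ}

lemma sum_pmOf_pair_fst (U : Ω → A) (W : Ω → C) (c : C) :
    ∑ a, pmOf p (fun ω => (U ω, W ω)) (a, c) = pmOf p W c := by
  rw [show pmOf p W c = pmOf p (fun ω => (U ω, W ω).2) c from rfl, pmOf_comp,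
    Fintype.sum_prod_type]
  simp

lemma sum_pmOf_pair_mul_pmOf_pair_div_le_one (hp : ∀ ω, 0 ≤ p ω) (hp1 : ∑ ω, p ω = 1)
    (U : Ω → A) (V : Ω → B) (W : Ω → C) :
    ∑ x : A × B × C, pmOf p (fun ω => (U ω, W ω)) (x.1, x.2.2)
      * pmOf p (fun ω => (V ω, W ω)) (x.2.1, x.2.2) / pmOf p W x.2.2 ≤ 1 := by
  rw [Fintype.sum_prod_type_right, Fintype.sum_prod_type_right, ← sum_pmOf hp1 W]
  refine sum_le_sum fun c _ => ?_
  simp only [← sum_div, ← sum_mul, ← mul_sum, sum_pmOf_pair_fst]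
  rcases (pmOf_nonneg hp W c).eq_or_lt with h0 | h0
  · simp [← h0]
  · rw [mul_div_assoc, div_self h0.ne', mul_one]

lemma condMI_nonneg (hp : ∀ ω, 0 ≤ p ω) (hp1 : ∑ ω, p ω = 1)
    (U : Ω → A) (V : Ω → B) (W : Ω → C) : 0 ≤ condMI p U V W := by
  set T : Ω → A × B × C := fun ω => (U ω, V ω, W ω)
  set P : A × B × C → ℝ := pmOf p T
  set pUW : A × B × C → ℝ := fun x => pmOf p (fun ω => (U ω, W ω)) (x.1, x.2.2)
  set pVW : A × B × C → ℝ := fun x => pmOf p (fun ω => (V ω, W ω)) (x.2.1, x.2.2)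
  set pW : A × B × C → ℝ := fun x => pmOf p W x.2.2
  have hUW : ent p (fun ω => (U ω, W ω)) = ∑ x, -(P x * Real.log (pUW x)) :=
    ent_comp_eq_sum T (fun x => (x.1, x.2.2))
  have hVW : ent p (fun ω => (V ω, W ω)) = ∑ x, -(P x * Real.log (pVW x)) :=
    ent_comp_eq_sum T (fun x => (x.2.1, x.2.2))
  have hW : ent p W = ∑ x, -(P x * Real.log (pW x)) := ent_comp_eq_sum T (fun x => x.2.2)
  have hUVW : ent p (fun ω => (U ω, V ω, W ω)) = ∑ x, -(P x * Real.log (P x)) := by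
    simp [ent, Real.negMulLog, P, T]
  have hpos : ∀ x, 0 < P x → 0 < pUW x ∧ 0 < pVW x ∧ 0 < pW x := fun x hx =>
    ⟨hx.trans_le (pmOf_le_pmOf_comp hp T (fun x => (x.1, x.2.2)) x),
      hx.trans_le (pmOf_le_pmOf_comp hp T (fun x => (x.2.1, x.2.2)) x),
      hx.trans_le (pmOf_le_pmOf_comp hp T (fun x => x.2.2) x)⟩
  have hlog : ∀ x, P x * Real.log (pUW x * pVW x / pW x)
      = P x * (Real.log (pUW x) + Real.log (pVW x) - Real.log (pW x)) := by
    intro x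
    rcases (pmOf_nonneg hp T x).eq_or_lt with h0 | h0
    · simp [P, ← h0]
    · obtain ⟨h1, h2, h3⟩ := hpos x h0
      rw [Real.log_div (by positivity) h3.ne', Real.log_mul h1.ne' h2.ne']
  have hQ : ∑ x, pUW x * pVW x / pW x ≤ ∑ x, P x :=
    (sum_pmOf_pair_mul_pmOf_pair_div_le_one hp hp1 U V W).trans_eq (sum_pmOf hp1 T).symm
  -- Gibbs' inequality, comparing the law of `(U, V, W)` with `p(a, c) p(b, c) / p(c)`
  have gibbs : ∑ x, P x * Real.log (pUW x * pVW x / pW x) ≤ ∑ x, P x * Real.log (P x) :=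
    sum_mul_log_le_sum_mul_log univ (fun x _ => pmOf_nonneg hp T x)
      (fun x _ => div_nonneg (mul_nonneg (pmOf_nonneg hp _ _) (pmOf_nonneg hp _ _))
        (pmOf_nonneg hp _ _))
      (fun x _ hx => by obtain ⟨h1, h2, h3⟩ := hpos x hx; positivity) hQ
  simp only [hlog, mul_add, mul_sub, sum_add_distrib, sum_sub_distrib] at gibbs
  simp only [condMI, hUW, hVW, hW, hUVW, sum_neg_distrib]
  linarith

lemma MI_comm (U : Ω → A) (V : Ω → B) : MI p U V = MI p V U := by
  have hswap : ent p (fun ω => (V ω, U ω)) = ent p (fun ω => (U ω, V ω)) :=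
    ent_comp_of_injective (fun ω => (U ω, V ω)) Prod.swap_injective
  rw [MI, MI, hswap]
  ring

lemma MI_eq_zero_of_subsingleton [Subsingleton A] (hp1 : ∑ ω, p ω = 1)
    (U : Ω → A) (V : Ω → B) : MI p U V = 0 := by
  have hpair : ent p (fun ω => (U ω, V ω)) = ent p V :=
    (ent_comp_of_injective (fun ω => (U ω, V ω)) (f := Prod.snd)
      fun x y h => Prod.ext (Subsingleton.elim _ _) h).symm
  rw [MI, hpair, ent_eq_zero_of_subsingleton hp1]
  ring

lemma MI_comp_left_of_injective (U : Ω → A) (V : Ω → B) {f : A → E}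
    (hf : Function.Injective f) : MI p (fun ω => f (U ω)) V = MI p U V := by
  have hUV : ent p (fun ω => (f (U ω), V ω)) = ent p (fun ω => (U ω, V ω)) :=
    ent_comp_of_injective (fun ω => (U ω, V ω)) (f := Prod.map f id)
      (hf.prodMap Function.injective_id)
  rw [MI, MI, ent_comp_of_injective U hf, hUV]

lemma MI_comp_right_of_injective (U : Ω → A) (V : Ω → B) {f : B → E}
    (hf : Function.Injective f) : MI p U (fun ω => f (V ω)) = MI p U V := by
  have hUV : ent p (fun ω => (U ω, f (V ω))) = ent p (fun ω => (U ω, V ω)) :=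
    ent_comp_of_injective (fun ω => (U ω, V ω)) (f := Prod.map id f)
      (Function.injective_id.prodMap hf)
  rw [MI, MI, ent_comp_of_injective V hf, hUV]

lemma condMI_comp_right_of_injective (U : Ω → A) (V : Ω → B) (W : Ω → C) {f : C → E}
    (hf : Function.Injective f) : condMI p U V (fun ω => f (W ω)) = condMI p U V W := by
  have hUW : ent p (fun ω => (U ω, f (W ω))) = ent p (fun ω => (U ω, W ω)) :=
    ent_comp_of_injective (fun ω => (U ω, W ω)) (f := Prod.map id f)
      (Function.injective_id.prodMap hf)
  have hVW : ent p (fun ω => (V ω, f (W ω))) = ent p (fun ω => (V ω, W ω)) :=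
    ent_comp_of_injective (fun ω => (V ω, W ω)) (f := Prod.map id f)
      (Function.injective_id.prodMap hf)
  have hUVW : ent p (fun ω => (U ω, V ω, f (W ω))) = ent p (fun ω => (U ω, V ω, W ω)) :=
    ent_comp_of_injective (fun ω => (U ω, V ω, W ω)) (f := Prod.map id (Prod.map id f))
      (Function.injective_id.prodMap (Function.injective_id.prodMap hf))
  rw [condMI, condMI, ent_comp_of_injective W hf, hUW, hVW, hUVW]

lemma MI_pair_left (U : Ω → A) (V : Ω → B) (Z : Ω → C) :
    MI p (fun ω => (U ω, V ω)) Z = MI p V Z + condMI p U Z V := by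
  have hassoc : ent p (fun ω => ((U ω, V ω), Z ω)) = ent p (fun ω => (U ω, Z ω, V ω)) :=
    ent_comp_of_injective (fun ω => (U ω, Z ω, V ω)) (f := fun x => ((x.1, x.2.2), x.2.1))
      fun x y h => by simp_all [Prod.ext_iff]
  have hswap : ent p (fun ω => (Z ω, V ω)) = ent p (fun ω => (V ω, Z ω)) :=
    ent_comp_of_injective (fun ω => (V ω, Z ω)) Prod.swap_injective
  rw [MI, MI, condMI, hassoc, hswap]
  ring

lemma MI_pair_right (U : Ω → A) (V : Ω → B) (W : Ω → C) :
    MI p U (fun ω => (V ω, W ω)) = MI p U W + condMI p U V W := by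
  rw [MI, MI, condMI]
  ring

lemma MI_comp_right_le (hp : ∀ ω, 0 ≤ p ω) (hp1 : ∑ ω, p ω = 1)
    (U : Ω → A) (W : Ω → C) (g : C → E) : MI p U (fun ω => g (W ω)) ≤ MI p U W := by
  have hgraph : MI p U (fun ω => (W ω, g (W ω))) = MI p U W :=
    MI_comp_right_of_injective U W (f := fun w => (w, g w)) fun x y h => (Prod.ext_iff.1 h).1
  rw [← hgraph, MI_pair_right]
  linarith [condMI_nonneg hp hp1 U W (fun ω => g (W ω))]

lemma MI_nonneg (hp : ∀ ω, 0 ≤ p ω) (hp1 : ∑ ω, p ω = 1) (U : Ω → A) (V : Ω → B) :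
    0 ≤ MI p U V := by
  have h := MI_comp_right_le hp hp1 U V (fun _ => ())
  rwa [MI_comm, MI_eq_zero_of_subsingleton hp1] at h

lemma condMI_comp_right_le_of_MI_eq_zero (hp : ∀ ω, 0 ≤ p ω) (hp1 : ∑ ω, p ω = 1)
    (U : Ω → A) (Z : Ω → B) (W : Ω → C) (g : C → E) (hUW : MI p U W = 0) :
    condMI p U Z (fun ω => g (W ω)) ≤ condMI p U Z W := by
  have hW := MI_pair_right (p := p) U Z W
  have hgW := MI_pair_right (p := p) U Z (fun ω => g (W ω))
  have hle := MI_comp_right_le hp hp1 U (fun ω => (Z ω, W ω)) (fun x => (x.1, g x.2))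
  linarith [MI_nonneg hp hp1 U (fun ω => g (W ω))]

lemma MI_eq_zero_of_pmOf_pair_eq_mul (hp1 : ∑ ω, p ω = 1) (U : Ω → A) (V : Ω → B)
    (h : ∀ a b, pmOf p (fun ω => (U ω, V ω)) (a, b) = pmOf p U a * pmOf p V b) :
    MI p U V = 0 := by
  have hent : ent p (fun ω => (U ω, V ω)) = ent p U + ent p V := by
    simp only [ent, Fintype.sum_prod_type, h, Real.negMulLog_mul, sum_add_distrib, ← sum_mul,
      ← mul_sum, sum_pmOf hp1, one_mul]
  rw [MI, hent]
  ring

end Information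

lemma Function.injective_restrict_of_iff {ι : Type*} {𝒳 : ι → Type*} {P Q : ι → Prop}
    (h : ∀ i, P i ↔ Q i) :
    Function.Injective fun (w : ∀ t : Subtype Q, 𝒳 t) (t : Subtype P) => w ⟨t, (h t).1 t.2⟩ :=
  fun _ _ hw => funext fun t => congrFun hw ⟨t, (h t).2 t.2⟩

section Families

variable {Ω ι E : Type} [Fintype Ω] [Fintype ι] [DecidableEq ι] [DecidableEq E]
  {𝒳 : ι → Type} [∀ i, Fintype (𝒳 i)] [∀ i, DecidableEq (𝒳 i)] {p : Ω → ℝ} {X : ∀ i, Ω → 𝒳 i}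

lemma pmOf_comp_eq_prod_of_indep
    (hind : ∀ x : ∀ i, 𝒳 i, pmOf p (fun ω => fun i => X i ω) x = ∏ i, pmOf p (X i) (x i))
    (F : (∀ i, 𝒳 i) → E) (e : E) (C : ∀ i, 𝒳 i → Prop) [∀ i, DecidablePred (C i)]
    (hC : ∀ x, F x = e ↔ ∀ i, C i (x i)) :
    pmOf p (fun ω => F (fun i => X i ω)) e = ∏ i, ∑ y ∈ univ.filter (C i), pmOf p (X i) y := by
  rw [pmOf_comp, prod_univ_sum, ← sum_filter]
  simp only [hind]
  congr 1
  ext x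
  simp [Fintype.mem_piFinset, hC]

lemma pmOf_subfamily_pair_of_indep (hp1 : ∑ ω, p ω = 1)
    (hind : ∀ x : ∀ i, 𝒳 i, pmOf p (fun ω => fun i => X i ω) x = ∏ i, pmOf p (X i) (x i))
    {P Q : ι → Prop} [Fintype (Subtype P)] [Fintype (Subtype Q)] (hPQ : ∀ i, P i → ¬ Q i)
    (v : ∀ t : Subtype P, 𝒳 t) (w : ∀ t : Subtype Q, 𝒳 t) :
    pmOf p (fun ω => (fun t : Subtype P => X t ω, fun t : Subtype Q => X t ω)) (v, w)
      = pmOf p (fun ω (t : Subtype P) => X t ω) v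
        * pmOf p (fun ω (t : Subtype Q) => X t ω) w := by
  classical
  let CP : ∀ i, 𝒳 i → Prop := fun i y => ∀ h : P i, y = v ⟨i, h⟩
  let CQ : ∀ i, 𝒳 i → Prop := fun i y => ∀ h : Q i, y = w ⟨i, h⟩
  rw [pmOf_comp_eq_prod_of_indep hind (fun x (t : Subtype P) => x t) v CP
      (fun x => by simp [CP, funext_iff]),
    pmOf_comp_eq_prod_of_indep hind (fun x (t : Subtype Q) => x t) w CQ
      (fun x => by simp [CQ, funext_iff]),
    pmOf_comp_eq_prod_of_indep hind
      (fun x => (fun t : Subtype P => x t, fun t : Subtype Q => x t)) (v, w)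
      (fun i y => CP i y ∧ CQ i y) (fun x => by simp [CP, CQ, funext_iff, forall_and]),
    ← prod_mul_distrib]
  refine prod_congr rfl fun i _ => ?_
  by_cases hi : P i
  · have hCQ : ∀ y, CQ i y := fun _ h => absurd h (hPQ i hi)
    simp [hCQ, sum_pmOf hp1]
  · have hCP : ∀ y, CP i y := fun _ h => absurd h hi
    simp [hCP, sum_pmOf hp1]

lemma MI_eq_zero_of_notMem_subfamily (hp1 : ∑ ω, p ω = 1)
    (hind : ∀ x : ∀ i, 𝒳 i, pmOf p (fun ω => fun i => X i ω) x = ∏ i, pmOf p (X i) (x i))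
    {Q : ι → Prop} [Fintype (Subtype Q)] {i : ι} (hi : ¬ Q i) :
    MI p (X i) (fun ω (t : Subtype Q) => X t ω) = 0 := by
  have hcoord : Function.Injective fun w : ∀ t : {t // t = i}, 𝒳 t => w ⟨i, rfl⟩ :=
    fun _ _ hw => funext fun ⟨_, ht⟩ => by subst ht; exact hw
  have hsingleton := MI_comp_left_of_injective (p := p) (fun ω (t : {t // t = i}) => X t ω)
    (fun ω (t : Subtype Q) => X t ω) hcoord
  have hindep := pmOf_subfamily_pair_of_indep hp1 hind (P := (· = i)) (Q := Q)
    (by rintro _ rfl; exact hi)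
  rw [← MI_eq_zero_of_pmOf_pair_eq_mul hp1 _ _ hindep]
  exact hsingleton

end Families

section Chain

variable {Ω ι : Type} [Fintype Ω] [Fintype ι] [LinearOrder ι]
  {𝒳 : ι → Type} [∀ i, Fintype (𝒳 i)] [∀ i, DecidableEq (𝒳 i)] {p : Ω → ℝ}

lemma MI_subfamily_eq_sum_condMI {B : Type} [Fintype B] [DecidableEq B]
    (hp1 : ∑ ω, p ω = 1) (X : ∀ i, Ω → 𝒳 i) (Z : Ω → B) (S : Finset ι) :
    MI p (fun ω (t : {t // t ∈ S}) => X t ω) Z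
      = ∑ i ∈ S, condMI p (X i) Z (fun ω (t : {t // t ∈ S ∧ i < t}) => X t ω) := by
  induction S using Finset.induction_on_min with
  | empty => simpa using MI_eq_zero_of_subsingleton hp1 _ Z
  | insert a s ha ih =>
    have has : a ∉ s := fun h => lt_irrefl a (ha a h)
    have hsplit : Function.Injective fun w : ∀ t : {t // t ∈ insert a s}, 𝒳 t =>
        (w ⟨a, mem_insert_self a s⟩,
          fun t : {t // t ∈ s} => w ⟨t, mem_insert_of_mem t.2⟩) := by
      intro w₁ w₂ hw
      funext ⟨t, ht⟩
      rcases mem_insert.1 ht with rfl | hts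
      · exact congrArg Prod.fst hw
      · exact congrFun (congrArg Prod.snd hw) ⟨t, hts⟩
    have hhead : ∀ t, t ∈ insert a s ∧ a < t ↔ t ∈ s := fun t =>
      ⟨fun ht => (mem_insert.1 ht.1).resolve_left ht.2.ne',
        fun ht => ⟨mem_insert_of_mem ht, ha t ht⟩⟩
    have htail : ∀ i ∈ s, ∀ t, t ∈ insert a s ∧ i < t ↔ t ∈ s ∧ i < t := fun i hi t =>
      ⟨fun ht => ⟨(mem_insert.1 ht.1).resolve_left ((ha i hi).trans ht.2).ne', ht.2⟩,
        fun ht => ⟨mem_insert_of_mem ht.1, ht.2⟩⟩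
    rw [← MI_comp_left_of_injective _ Z hsplit, MI_pair_left, ih, sum_insert has, add_comm]
    congr 1
    · exact (condMI_comp_right_of_injective _ _ _
        (Function.injective_restrict_of_iff hhead)).symm
    · exact sum_congr rfl fun i hi => (condMI_comp_right_of_injective _ _ _
        (Function.injective_restrict_of_iff (htail i hi))).symm

end Chain

/-- For mutually independent finitely-valued `X_1,…,X_q` and any finitely-valued `Z̃`
on the same finite probability space, and every `S ⊆ {1,…,q}`:
`∑_{i∈S} I(X_i;Z̃|X_{i+1:q}) ≥ I(X_S;Z̃)`. -/
theorem stmt11 {Ω : Type} [Fintype Ω] (q : ℕ) (𝒳 : Fin q → Type)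
    [∀ i, Fintype (𝒳 i)] [∀ i, DecidableEq (𝒳 i)]
    {B : Type} [Fintype B] [DecidableEq B]
    (p : Ω → ℝ) (hp : ∀ ω, 0 ≤ p ω) (hp1 : ∑ ω, p ω = 1)
    (X : ∀ i, Ω → 𝒳 i) (Z : Ω → B)
    (hind : ∀ x : ∀ i, 𝒳 i,
      pmOf p (fun ω => fun i => X i ω) x = ∏ i, pmOf p (X i) (x i))
    (S : Finset (Fin q)) :
    ∑ i ∈ S, condMI p (X i) Z (fun ω => fun t : {t : Fin q // i < t} => X t ω)
      ≥ MI p (fun ω => fun t : {t : Fin q // t ∈ S} => X t ω) Z := by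
  rw [ge_iff_le, MI_subfamily_eq_sum_condMI hp1 X Z S]
  refine sum_le_sum fun i _ => ?_
  exact condMI_comp_right_le_of_MI_eq_zero hp hp1 (X i) Z (fun ω (t : {t // i < t}) => X t ω)
    (fun w (t : {t // t ∈ S ∧ i < t}) => w ⟨t, t.2.2⟩)
    (MI_eq_zero_of_notMem_subfamily hp1 hind (lt_irrefl i))
end
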